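/- There is a satisfiable HyperCTL* sentence φ_𝔠 such that every model of φ_𝔠 has at least 𝔠 vertices; in fact, in every model of φ_𝔠 the initial vertex has at least 𝔠 many successors (for each set A ⊆ ℕ there is a path ρ_A starting at a successor of the initial vertex whose i-th vertex is labelled with 1 if i ∈ A and with 0 otherwise, and distinct sets A ≠ B yield distinct initial vertices ρ_A(0) ≠ ρ_B(0)). -/

import Mathlib

/-! ### Transition systems and HyperCTL* -/

/-- A transition system over `AP`: every vertex has an outgoing edge. -/
structure TS (AP : Type) : Type 1 where
  V : Type
  E : V → V → Prop
  vI : V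
  lab : V → Set AP
  succ : ∀ v, ∃ w, E v w

/-- A path through a transition system. -/
def TS.IsPath {AP : Type} (S : TS AP) (ρ : ℕ → S.V) : Prop :=
  ∀ i, S.E (ρ i) (ρ (i + 1))

/-- HyperCTL* formulas; path variables are natural numbers. -/
inductive CTL (AP : Type) : Type where
  | atom : AP → ℕ → CTL AP
  | neg  : CTL AP → CTL AP
  | disj : CTL AP → CTL AP → CTL AP
  | next : CTL AP → CTL AP
  | untl : CTL AP → CTL AP → CTL AP
  | ex   : ℕ → CTL AP → CTL AP
  | all  : ℕ → CTL AP → CTL AP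

/-- Semantics of HyperCTL* w.r.t. a path assignment `As` and the variable `r`
most recently added to the assignment: quantified paths start at the first
vertex of the most recently assigned path. -/
def CTL.sat {AP : Type} (S : TS AP) : CTL AP → (ℕ → ℕ → S.V) → ℕ → Prop
  | .atom a x, As, _ => a ∈ S.lab (As x 0)
  | .neg φ, As, r => ¬ φ.sat S As r
  | .disj φ ψ, As, r => φ.sat S As r ∨ ψ.sat S As r
  | .next φ, As, r => φ.sat S (fun x i => As x (i + 1)) r
  | .untl φ ψ, As, r =>
      ∃ j, ψ.sat S (fun x i => As x (i + j)) r ∧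
        ∀ j' < j, φ.sat S (fun x i => As x (i + j')) r
  | .ex x φ, As, r => ∃ ρ : ℕ → S.V, S.IsPath ρ ∧ ρ 0 = As r 0 ∧
      φ.sat S (Function.update As x ρ) x
  | .all x φ, As, r => ∀ ρ : ℕ → S.V, S.IsPath ρ → ρ 0 = As r 0 →
      φ.sat S (Function.update As x ρ) x

def CTL.freeVars {AP : Type} : CTL AP → Set ℕ
  | .atom _ x => {x}
  | .neg φ => φ.freeVars
  | .disj φ ψ => φ.freeVars ∪ ψ.freeVars
  | .next φ => φ.freeVars
  | .untl φ ψ => φ.freeVars ∪ ψ.freeVars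
  | .ex x φ => φ.freeVars \ {x}
  | .all x φ => φ.freeVars \ {x}

/-- Every temporal operator occurs in the scope of a path quantifier. -/
def CTL.guarded {AP : Type} : CTL AP → Prop
  | .atom _ _ => True
  | .neg φ => φ.guarded
  | .disj φ ψ => φ.guarded ∧ ψ.guarded
  | .next _ => False
  | .untl _ _ => False
  | .ex _ _ => True
  | .all _ _ => True

/-- A HyperCTL* sentence: no free variables and all temporal operators occur
under a path quantifier. -/
def CTL.IsSentence {AP : Type} (φ : CTL AP) : Prop := φ.freeVars = ∅ ∧ φ.guarded

/-- `S ⊨ φ`: satisfaction w.r.t. the empty assignment, i.e. quantification of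
the first path starts at the initial vertex (for sentences the choice of the
initial dummy path is irrelevant). -/
def CModels {AP : Type} (S : TS AP) (φ : CTL AP) : Prop :=
  ∀ ρ : ℕ → S.V, S.IsPath ρ → ρ 0 = S.vI → φ.sat S (fun _ => ρ) 0

/-- The atomic propositions `fbt`, `pset`, `0`, `1`. -/
inductive AP4 : Type where
  | fbt | pset | zero | one
deriving DecidableEq

/-! Below the initial vertex, every vertex carries exactly one bit `0`/`1`; the initial vertex
and every `fbt` vertex have an `fbt` child of either bit, so by dependent choice every `A ⊆ ℕ` is
spelled out by a path of `fbt` vertices. Each such path is copied bit by bit by a path through a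
`pset` successor of the initial vertex, and all paths leaving a `pset` successor carry the same
bits, so that successor determines `A`. A model consists of two `fbt` vertices, one per bit, joined
by all edges, and for each `A` a `pset` line spelling out `A`. -/

lemma exists_seq_of_forall_exists {α : Type*} {P : ℕ → α → Prop} {R : α → α → Prop} {a : α}
    (h0 : P 0 a) (h : ∀ n x, P n x → ∃ y, R x y ∧ P (n + 1) y) :
    ∃ f : ℕ → α, ∀ n, P n (f n) ∧ R (f n) (f (n + 1)) := by
  choose g hg using h
  let F : ∀ n, {x // P n x} := fun n =>
    Nat.rec ⟨a, h0⟩ (fun n x => ⟨g n x.1 x.2, (hg n x.1 x.2).2⟩) n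
  exact ⟨fun n => (F n).1, fun n => ⟨(F n).2, (hg n _ (F n).2).1⟩⟩

lemma Cardinal.continuum_le_mk_of_injective {α : Type} {f : Set ℕ → α}
    (hf : Function.Injective f) : Cardinal.continuum ≤ Cardinal.mk α :=
  Cardinal.mk_set_nat ▸ Cardinal.mk_le_of_injective hf

namespace TS

variable {AP : Type} {S : TS AP}

lemma exists_path (S : TS AP) (v : S.V) : ∃ ρ, S.IsPath ρ ∧ ρ 0 = v := by
  choose f hf using S.succ
  exact ⟨fun n => f^[n] v, fun i => by simpa only [Function.iterate_succ_apply'] using hf _, rfl⟩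

lemma IsPath.shift {ρ : ℕ → S.V} (hρ : S.IsPath ρ) (k : ℕ) : S.IsPath (fun i => ρ (i + k)) :=
  fun i => by simpa only [Nat.add_right_comm i 1 k] using hρ (i + k)

def splice (ρ : ℕ → S.V) (n : ℕ) (τ : ℕ → S.V) : ℕ → S.V :=
  fun i => if i ≤ n then ρ i else τ (i - n)

lemma splice_of_le {ρ τ : ℕ → S.V} {n i : ℕ} (hi : i ≤ n) : splice ρ n τ i = ρ i := if_pos hi

lemma splice_add_one {ρ τ : ℕ → S.V} {n : ℕ} : splice ρ n τ (n + 1) = τ 1 := by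
  simp [splice]

lemma IsPath.splice {ρ τ : ℕ → S.V} (hρ : S.IsPath ρ) (hτ : S.IsPath τ) {n : ℕ}
    (h : τ 0 = ρ n) : S.IsPath (splice ρ n τ) := by
  intro i
  rcases lt_trichotomy i n with hi | rfl | hi
  · rw [splice_of_le hi.le, splice_of_le hi]; exact hρ i
  · rw [splice_of_le le_rfl, splice_add_one, ← h]; exact hτ 0
  · simp only [TS.splice, if_neg hi.not_ge, if_neg (by omega : ¬ i + 1 ≤ n),
      show i + 1 - n = i - n + 1 by omega]
    exact hτ _

end TS

namespace CTL

variable {AP : Type}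

def and (φ ψ : CTL AP) : CTL AP := .neg (.disj (.neg φ) (.neg ψ))

def imp (φ ψ : CTL AP) : CTL AP := .disj (.neg φ) ψ

def iff (φ ψ : CTL AP) : CTL AP := .and (.imp φ ψ) (.imp ψ φ)

/-- `G φ`, written as `¬ (⊤ U ¬φ)` with `⊤ := φ ∨ ¬φ` so that no extra path variable occurs. -/
def always (φ : CTL AP) : CTL AP := .neg (.untl (.disj φ (.neg φ)) (.neg φ))

variable {S : TS AP} {φ ψ : CTL AP} {As : ℕ → ℕ → S.V} {r : ℕ}

@[simp] lemma sat_and : (φ.and ψ).sat S As r ↔ φ.sat S As r ∧ ψ.sat S As r := by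
  simp only [CTL.and, sat, not_or, not_not]

@[simp] lemma sat_imp : (φ.imp ψ).sat S As r ↔ (φ.sat S As r → ψ.sat S As r) := by
  simp only [imp, sat, imp_iff_not_or]

@[simp] lemma sat_iff : (φ.iff ψ).sat S As r ↔ (φ.sat S As r ↔ ψ.sat S As r) := by
  simp only [CTL.iff, sat_and, sat_imp, iff_iff_implies_and_implies]

@[simp] lemma sat_always :
    φ.always.sat S As r ↔ ∀ j, φ.sat S (fun x i => As x (i + j)) r := by
  simp only [always, sat, not_exists, not_and, not_forall]
  exact ⟨fun h j => by_contra fun hj => (h j hj).elim fun j' ⟨_, h'⟩ => h' (em _),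
    fun h j hj => absurd (h j) hj⟩

end CTL

def bitAP : Bool → AP4
  | false => .zero
  | true => .one

def bitsExclusive : CTL AP4 :=
  .all 1 (.next (.always (.iff (.atom .zero 1) (.neg (.atom .one 1)))))

def fbtChild (b : Bool) : CTL AP4 := .ex 2 (.next (.and (.atom .fbt 2) (.atom (bitAP b) 2)))

def branching : CTL AP4 := .and (fbtChild false) (fbtChild true)

def fbtBranching : CTL AP4 := .all 1 (.next (.always (.imp (.atom .fbt 1) branching)))

def psetCopy : CTL AP4 :=
  .all 1 (.imp (.next (.always (.atom .fbt 1)))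
    (.ex 2 (.and (.next (.atom .pset 2)) (.next (.always (.iff (.atom .one 1) (.atom .one 2)))))))

def psetDeterminate : CTL AP4 :=
  .all 1 (.next (.imp (.atom .pset 1)
    (.all 2 (.all 3 (.always (.iff (.atom .one 2) (.atom .one 3)))))))

def continuumSentence : CTL AP4 :=
  .and bitsExclusive (.and branching (.and fbtBranching (.and psetCopy psetDeterminate)))

section

open CTL

variable {S : TS AP4} {As : ℕ → ℕ → S.V} {r : ℕ}

lemma sat_branching : branching.sat S As r ↔
    ∀ b, ∃ τ, S.IsPath τ ∧ τ 0 = As r 0 ∧ AP4.fbt ∈ S.lab (τ 1) ∧ bitAP b ∈ S.lab (τ 1) := by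
  simp [branching, fbtChild, sat, Bool.forall_bool]

lemma sat_bitsExclusive : bitsExclusive.sat S As r ↔ ∀ ρ, S.IsPath ρ → ρ 0 = As r 0 →
    ∀ j, (AP4.zero ∈ S.lab (ρ (j + 1)) ↔ AP4.one ∉ S.lab (ρ (j + 1))) := by
  simp [bitsExclusive, sat]

lemma sat_fbtBranching : fbtBranching.sat S As r ↔ ∀ ρ, S.IsPath ρ → ρ 0 = As r 0 → ∀ j,
    AP4.fbt ∈ S.lab (ρ (j + 1)) → ∀ b, ∃ τ, S.IsPath τ ∧ τ 0 = ρ (j + 1) ∧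
      AP4.fbt ∈ S.lab (τ 1) ∧ bitAP b ∈ S.lab (τ 1) := by
  simp [fbtBranching, sat, sat_branching]

lemma sat_psetCopy : psetCopy.sat S As r ↔ ∀ ρ, S.IsPath ρ → ρ 0 = As r 0 →
    (∀ j, AP4.fbt ∈ S.lab (ρ (j + 1))) → ∃ τ, S.IsPath τ ∧ τ 0 = As r 0 ∧
      AP4.pset ∈ S.lab (τ 1) ∧
        ∀ j, (AP4.one ∈ S.lab (ρ (j + 1)) ↔ AP4.one ∈ S.lab (τ (j + 1))) := by
  simp only [psetCopy, sat, sat_imp, sat_and, sat_always, sat_iff, Function.update_self]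
  refine forall_congr' fun ρ => imp_congr_right fun _ => imp_congr_right fun h0 => ?_
  simp [h0]

lemma sat_psetDeterminate : psetDeterminate.sat S As r ↔ ∀ ρ, S.IsPath ρ → ρ 0 = As r 0 →
    AP4.pset ∈ S.lab (ρ 1) → ∀ τ, S.IsPath τ → τ 0 = ρ 1 → ∀ τ', S.IsPath τ' → τ' 0 = τ 0 →
      ∀ j, (AP4.one ∈ S.lab (τ j) ↔ AP4.one ∈ S.lab (τ' j)) := by
  simp [psetDeterminate, sat]

structure ContinuumSpec (S : TS AP4) (v : S.V) : Prop where
  bits_exclusive : ∀ ρ, S.IsPath ρ → ρ 0 = v →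
    ∀ j, (AP4.zero ∈ S.lab (ρ (j + 1)) ↔ AP4.one ∉ S.lab (ρ (j + 1)))
  root_branching : ∀ b, ∃ τ, S.IsPath τ ∧ τ 0 = v ∧ AP4.fbt ∈ S.lab (τ 1) ∧ bitAP b ∈ S.lab (τ 1)
  fbt_branching : ∀ ρ, S.IsPath ρ → ρ 0 = v → ∀ j, AP4.fbt ∈ S.lab (ρ (j + 1)) →
    ∀ b, ∃ τ, S.IsPath τ ∧ τ 0 = ρ (j + 1) ∧ AP4.fbt ∈ S.lab (τ 1) ∧ bitAP b ∈ S.lab (τ 1)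
  pset_copy : ∀ ρ, S.IsPath ρ → ρ 0 = v → (∀ j, AP4.fbt ∈ S.lab (ρ (j + 1))) →
    ∃ τ, S.IsPath τ ∧ τ 0 = v ∧ AP4.pset ∈ S.lab (τ 1) ∧
      ∀ j, (AP4.one ∈ S.lab (ρ (j + 1)) ↔ AP4.one ∈ S.lab (τ (j + 1)))
  pset_determinate : ∀ ρ, S.IsPath ρ → ρ 0 = v → AP4.pset ∈ S.lab (ρ 1) →
    ∀ τ, S.IsPath τ → τ 0 = ρ 1 → ∀ τ', S.IsPath τ' → τ' 0 = τ 0 →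
      ∀ j, (AP4.one ∈ S.lab (τ j) ↔ AP4.one ∈ S.lab (τ' j))

lemma sat_continuumSentence : continuumSentence.sat S As r ↔ ContinuumSpec S (As r 0) := by
  simp only [continuumSentence, sat_and, sat_bitsExclusive, sat_branching, sat_fbtBranching,
    sat_psetCopy, sat_psetDeterminate]
  exact ⟨fun ⟨a, b, c, d, e⟩ => ⟨a, b, c, d, e⟩, fun ⟨a, b, c, d, e⟩ => ⟨a, b, c, d, e⟩⟩

lemma cModels_continuumSentence_iff : CModels S continuumSentence ↔ ContinuumSpec S S.vI := by
  refine ⟨fun h => ?_, fun h ρ _ h0 => sat_continuumSentence.2 (h0 ▸ h)⟩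
  obtain ⟨ρ, hρ, h0⟩ := S.exists_path S.vI
  simpa [h0] using sat_continuumSentence.1 (h ρ hρ h0)

lemma continuumSentence_isSentence : continuumSentence.IsSentence := by
  constructor
  · ext n
    simp [continuumSentence, bitsExclusive, branching, fbtChild, fbtBranching, psetCopy,
      psetDeterminate, CTL.and, imp, CTL.iff, always, freeVars]
  · simp [continuumSentence, bitsExclusive, branching, fbtChild, fbtBranching, psetCopy,
      psetDeterminate, CTL.and, guarded]

lemma one_mem_iff_of_bitAP_mem {L : Set AP4} {b : Bool} (hL : AP4.zero ∈ L ↔ AP4.one ∉ L)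
    (hb : bitAP b ∈ L) : AP4.one ∈ L ↔ b = true := by
  cases b <;> simp_all [bitAP]

namespace ContinuumSpec

variable {v : S.V} (h : ContinuumSpec S v)
include h

lemma exists_path_fbt_bits (c : ℕ → Bool) : ∃ ρ, S.IsPath ρ ∧ ρ 0 = v ∧
    ∀ n, AP4.fbt ∈ S.lab (ρ (n + 1)) ∧ bitAP (c n) ∈ S.lab (ρ (n + 1)) := by
  -- `P (n + 1) w` keeps a path from `v` through `w`, so that `fbt_branching` applies at `w`.
  let P : ℕ → S.V → Prop
    | 0, w => w = v
    | n + 1, w => (∃ ρ, S.IsPath ρ ∧ ρ 0 = v ∧ ∃ j, ρ (j + 1) = w) ∧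
        AP4.fbt ∈ S.lab w ∧ bitAP (c n) ∈ S.lab w
  have step : ∀ n w, P n w → ∃ w', S.E w w' ∧ P (n + 1) w'
    | 0, w, (hw : w = v) => by
      obtain ⟨τ, hτ, hτ0, hfbt, hbit⟩ := h.root_branching (c 0)
      exact ⟨τ 1, hw ▸ hτ0 ▸ hτ 0, ⟨τ, hτ, hτ0, 0, rfl⟩, hfbt, hbit⟩
    | n + 1, w, ⟨⟨ρ, hρ, hρ0, j, hj⟩, hfbt, _⟩ => by
      obtain ⟨τ, hτ, hτ0, hfbt', hbit'⟩ :=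
        h.fbt_branching ρ hρ hρ0 j (hj ▸ hfbt) (c (n + 1))
      refine ⟨τ 1, hj ▸ hτ0 ▸ hτ 0, ⟨TS.splice ρ (j + 1) τ, hρ.splice hτ hτ0, ?_, j + 1,
        TS.splice_add_one⟩, hfbt', hbit'⟩
      rw [TS.splice_of_le (Nat.zero_le _), hρ0]
  obtain ⟨ρ, hρ⟩ := exists_seq_of_forall_exists (P := P) rfl step
  exact ⟨ρ, fun n => (hρ n).2, (hρ 0).1, fun n => (hρ (n + 1)).1.2⟩

lemma exists_pset_path_encoding (A : Set ℕ) : ∃ τ, S.IsPath τ ∧ τ 0 = v ∧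
    AP4.pset ∈ S.lab (τ 1) ∧
      ∀ i, (AP4.one ∈ S.lab (τ (i + 1)) ↔ i ∈ A) ∧ (AP4.zero ∈ S.lab (τ (i + 1)) ↔ i ∉ A) := by
  classical
  obtain ⟨ρ, hρ, hρ0, hρA⟩ := h.exists_path_fbt_bits fun n => decide (n ∈ A)
  obtain ⟨τ, hτ, hτ0, hpset, hτρ⟩ := h.pset_copy ρ hρ hρ0 fun n => (hρA n).1
  have hone : ∀ i, AP4.one ∈ S.lab (τ (i + 1)) ↔ i ∈ A := fun i => by
    rw [← hτρ, one_mem_iff_of_bitAP_mem (h.bits_exclusive ρ hρ hρ0 i) (hρA i).2,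
      decide_eq_true_iff]
  exact ⟨τ, hτ, hτ0, hpset, fun i => ⟨hone i, by rw [h.bits_exclusive τ hτ hτ0, hone]⟩⟩

lemma eq_of_pset_paths {A B : Set ℕ} {τ τ' : ℕ → S.V} (hτ : S.IsPath τ) (hτ0 : τ 0 = v)
    (hpset : AP4.pset ∈ S.lab (τ 1)) (hτ' : S.IsPath τ') (h1 : τ' 1 = τ 1)
    (hA : ∀ i, AP4.one ∈ S.lab (τ (i + 1)) ↔ i ∈ A)
    (hB : ∀ i, AP4.one ∈ S.lab (τ' (i + 1)) ↔ i ∈ B) : A = B := by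
  ext i
  rw [← hA, ← hB]
  exact h.pset_determinate τ hτ hτ0 hpset _ (hτ.shift 1) rfl _ (hτ'.shift 1) h1 i

end ContinuumSpec

end

namespace ContinuumModel

inductive Vertex : Type where
  | root
  | tree (b : Bool)
  | copy (A : Set ℕ) (i : ℕ)

open Vertex

def Edge : Vertex → Vertex → Prop
  | root, tree _ | root, copy _ 0 | tree _, tree _ => True
  | copy A i, copy B j => B = A ∧ j = i + 1
  | _, _ => False

open Classical in
def label : Vertex → Set AP4
  | root => ∅
  | tree b => {.fbt, bitAP b}
  | copy A i => {.pset, bitAP (decide (i ∈ A))}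

end ContinuumModel

open ContinuumModel ContinuumModel.Vertex in
def continuumModel : TS AP4 where
  V := Vertex
  E := Edge
  vI := root
  lab := label
  succ
    | root => ⟨tree false, trivial⟩
    | tree b => ⟨tree b, trivial⟩
    | copy A i => ⟨copy A (i + 1), rfl, rfl⟩

namespace ContinuumModel

open Vertex

lemma Edge.ne_root {u w : Vertex} (h : Edge u w) : w ≠ root := by
  rintro rfl
  cases u <;> exact h

lemma zero_mem_label_iff {w : Vertex} (hw : w ≠ root) :
    AP4.zero ∈ label w ↔ AP4.one ∉ label w := by
  cases w with
  | root => exact absurd rfl hw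
  | tree b => cases b <;> simp [label, bitAP]
  | copy A i => by_cases hi : i ∈ A <;> simp [label, bitAP, hi]

lemma fbt_mem_label_iff {w : Vertex} : AP4.fbt ∈ label w ↔ ∃ b, w = tree b := by
  cases w with
  | copy A i => by_cases hi : i ∈ A <;> simp [label, bitAP, hi]
  | _ => simp [label]

lemma pset_mem_label_iff {w : Vertex} : AP4.pset ∈ label w ↔ ∃ A i, w = copy A i := by
  cases w with
  | tree b => cases b <;> simp [label, bitAP]
  | _ => simp [label]

lemma one_mem_label_copy {A : Set ℕ} {i : ℕ} : AP4.one ∈ label (copy A i) ↔ i ∈ A := by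
  by_cases hi : i ∈ A <;> simp [label, bitAP, hi]

lemma isPath_then_tree {u : Vertex} {b : Bool} (h : Edge u (tree b)) :
    continuumModel.IsPath fun n => if n = 0 then u else tree b
  | 0 => by simpa [continuumModel] using h
  | _ + 1 => trivial

def copyPath (A : Set ℕ) : ℕ → Vertex
  | 0 => root
  | n + 1 => copy A n

lemma isPath_copyPath (A : Set ℕ) : continuumModel.IsPath (copyPath A)
  | 0 => trivial
  | _ + 1 => ⟨rfl, rfl⟩

lemma eq_copy_of_isPath {τ : ℕ → Vertex} (hτ : continuumModel.IsPath τ) {A : Set ℕ} {i : ℕ}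
    (h0 : τ 0 = copy A i) : ∀ n, τ n = copy A (i + n)
  | 0 => h0
  | n + 1 => by
    have hE : Edge (copy A (i + n)) (τ (n + 1)) := eq_copy_of_isPath hτ h0 n ▸ hτ n
    cases hτn : τ (n + 1) <;> rw [hτn] at hE
    all_goals first | exact hE.elim | obtain ⟨rfl, rfl⟩ := hE; rfl

lemma spec : ContinuumSpec continuumModel root where
  bits_exclusive ρ hρ _ j := zero_mem_label_iff (hρ j).ne_root
  root_branching b :=
    ⟨_, isPath_then_tree (u := root) (b := b) trivial, rfl, by simp [continuumModel, label]⟩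
  fbt_branching ρ hρ _ j hfbt b := by
    obtain ⟨b', hb'⟩ := fbt_mem_label_iff.1 hfbt
    exact ⟨_, isPath_then_tree (u := tree b') (b := b) trivial, hb'.symm,
      by simp [continuumModel, label]⟩
  pset_copy ρ _ _ _ :=
    let A := {n | AP4.one ∈ label (ρ (n + 1))}
    ⟨copyPath A, isPath_copyPath A, rfl, by simp [continuumModel, copyPath, label],
      fun j => (one_mem_label_copy (A := A) (i := j)).symm⟩
  pset_determinate _ _ _ hpset τ hτ hτ0 τ' hτ' hτ'0 j := by
    obtain ⟨A, i, hAi⟩ := pset_mem_label_iff.1 hpset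
    rw [eq_copy_of_isPath hτ (hτ0.trans hAi), eq_copy_of_isPath hτ' (hτ'0.trans (hτ0.trans hAi))]

end ContinuumModel

/-- **A satisfiable HyperCTL* sentence all of whose models have at least `𝔠`
vertices**: every model contains, for each `A ⊆ ℕ`, a path `ρ_A` starting at a
successor of the initial vertex whose `i`-th vertex is labelled `1` iff `i ∈ A`
(and `0` otherwise), with pairwise distinct first vertices; in particular the
initial vertex has at least `𝔠` successors. -/
theorem hyperctl_continuum_lower_bound :
    ∃ φ : CTL AP4, φ.IsSentence ∧ (∃ S : TS AP4, CModels S φ) ∧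
      ∀ S : TS AP4, CModels S φ →
        Cardinal.continuum ≤ Cardinal.mk S.V ∧
        Cardinal.continuum ≤ Cardinal.mk {v : S.V // S.E S.vI v} ∧
        ∃ ρ : Set ℕ → (ℕ → S.V),
          (∀ A : Set ℕ, S.IsPath (ρ A) ∧ S.E S.vI (ρ A 0) ∧
            ∀ i : ℕ, (AP4.one ∈ S.lab (ρ A i) ↔ i ∈ A) ∧
              (AP4.zero ∈ S.lab (ρ A i) ↔ i ∉ A)) ∧
          ∀ A B : Set ℕ, A ≠ B → ρ A 0 ≠ ρ B 0 := by
  refine ⟨continuumSentence, continuumSentence_isSentence,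
    ⟨continuumModel, cModels_continuumSentence_iff.2 ContinuumModel.spec⟩, fun S hS => ?_⟩
  have hspec := cModels_continuumSentence_iff.1 hS
  choose τ hτ hτ0 hpset henc using hspec.exists_pset_path_encoding
  have hne : ∀ A B, A ≠ B → τ A 1 ≠ τ B 1 := fun A B hAB h1 =>
    hAB (hspec.eq_of_pset_paths (hτ A) (hτ0 A) (hpset A) (hτ B) h1.symm
      (fun i => (henc A i).1) fun i => (henc B i).1)
  have hsucc : Cardinal.continuum ≤ Cardinal.mk {v : S.V // S.E S.vI v} :=
    Cardinal.continuum_le_mk_of_injective (f := fun A => ⟨τ A 1, hτ0 A ▸ hτ A 0⟩)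
      fun A B h => not_imp_not.1 (hne A B) (congrArg Subtype.val h)
  exact ⟨hsucc.trans (Cardinal.mk_subtype_le _), hsucc, fun A i => τ A (i + 1),
    fun A => ⟨(hτ A).shift 1, hτ0 A ▸ hτ A 0, henc A⟩, hne⟩
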